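/- arXiv:0810.3814 — 3 statements merged into one kernel-verified Lean document; each statement's English description precedes it below -/
import Mathlib

section
/- Let U be unitary on a finite-dimensional complex Hilbert space, |0⟩ a unit vector, P an orthogonal projection, and set |Φ⟩ = U|0⟩, |Φ_g⟩ = P|Φ⟩, |Φ_b⟩ = (I−P)|Φ⟩, g = ⟨Φ_g|Φ_g⟩. For Q = −U P₀^{φ₁} U⁻¹ P_χ^{φ₂} (with the conditional phase operators P₀^{φ₁}, P_χ^{φ₂} as above), the action of Q on |Φ_g⟩ is Q|Φ_g⟩ = e^{iφ₂}((1−e^{iφ₁})g − 1)|Φ_g⟩ + e^{iφ₂}(1−e^{iφ₁})g |Φ_b⟩. -/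
/-- The rank-one orthogonal projection `|v⟩⟨v|`. -/
noncomputable def ketBra {H : Type*} [NormedAddCommGroup H] [InnerProductSpace ℂ H]
    (v : H) : H →L[ℂ] H :=
  (innerSL ℂ v).smulRight v

/-- `P₀^φ = I − (1 − e^{iφ})|0⟩⟨0|`. -/
noncomputable def condPhase0 {H : Type*} [NormedAddCommGroup H] [InnerProductSpace ℂ H]
    (v : H) (φ : ℝ) : H →L[ℂ] H :=
  1 - (1 - Complex.exp (φ * Complex.I)) • ketBra v

/-- `P_χ^φ = I − (1 − e^{iφ})P`. -/
noncomputable def condPhaseProj {H : Type*} [NormedAddCommGroup H] [InnerProductSpace ℂ H]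
    (P : H →L[ℂ] H) (φ : ℝ) : H →L[ℂ] H :=
  1 - (1 - Complex.exp (φ * Complex.I)) • P

/-!
Unitary conjugation turns the phase about `|0⟩` into the same phase about `|Φ⟩ = U|0⟩`,
and `|Φ_g⟩` is fixed by `P`, so `P_χ^{φ₂}` only multiplies it by `e^{iφ₂}`. Hence
`Q|Φ_g⟩ = -e^{iφ₂}(|Φ_g⟩ - (1 - e^{iφ₁})⟨Φ|Φ_g⟩|Φ⟩)`, and `⟨Φ|Φ_g⟩ = ⟨Φ|P|Φ⟩ = g` because `P` is an
orthogonal projection; splitting `|Φ⟩ = |Φ_g⟩ + |Φ_b⟩` gives the formula.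
-/

open ContinuousLinearMap

section

variable {H : Type*} [NormedAddCommGroup H] [InnerProductSpace ℂ H]

lemma condPhase0_apply (v : H) (φ : ℝ) (x : H) :
    condPhase0 v φ x = x - ((1 - Complex.exp (φ * Complex.I)) * inner ℂ v x) • v := by
  simp only [condPhase0, ketBra, sub_apply, smul_apply, one_apply_eq_self, smulRight_apply,
    innerSL_apply_apply, smul_smul]

lemma condPhaseProj_apply_of_apply_eq_self {P : H →L[ℂ] H} {x : H} (hx : P x = x) (φ : ℝ) :
    condPhaseProj P φ x = Complex.exp (φ * Complex.I) • x := by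
  simp only [condPhaseProj, sub_apply, smul_apply, one_apply_eq_self, hx]
  module

variable [CompleteSpace H]

lemma comp_condPhase0_comp_adjoint {U : H →L[ℂ] H} (hU : U ∘L adjoint U = 1) (v : H) (φ : ℝ) :
    U ∘L condPhase0 v φ ∘L adjoint U = condPhase0 (U v) φ := by
  have hUU (x : H) : U (adjoint U x) = x := by simpa using congr($hU x)
  ext x
  simp only [comp_apply, condPhase0_apply, map_sub, map_smul, hUU, adjoint_inner_right]

lemma inner_apply_eq_norm_apply_sq {P : H →L[ℂ] H} (hP2 : P ∘L P = P) (hPa : adjoint P = P)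
    (x : H) : inner ℂ x (P x) = ((‖P x‖ ^ 2 : ℝ) : ℂ) := by
  calc inner ℂ x (P x) = inner ℂ x (P (P x)) := by rw [← comp_apply, hP2]
    _ = inner ℂ (P x) (P x) := by rw [← adjoint_inner_left, hPa]
    _ = ((‖P x‖ ^ 2 : ℝ) : ℂ) := by rw [inner_self_eq_norm_sq_to_K]; push_cast; rfl

end

theorem Q_action_on_good_general
    {H : Type*} [NormedAddCommGroup H] [InnerProductSpace ℂ H] [FiniteDimensional ℂ H]
    (U : H →L[ℂ] H)
    (hU2 : U ∘L ContinuousLinearMap.adjoint U = 1)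
    (v : H)
    (P : H →L[ℂ] H) (hP2 : P ∘L P = P) (hPa : ContinuousLinearMap.adjoint P = P)
    (φ₁ φ₂ : ℝ)
    (Q : H →L[ℂ] H)
    (hQ : Q = -(U ∘L condPhase0 v φ₁ ∘L ContinuousLinearMap.adjoint U ∘L condPhaseProj P φ₂))
    (Φ Φg Φb : H) (hΦ : Φ = U v) (hΦg : Φg = P Φ) (hΦb : Φb = Φ - Φg)
    (g : ℂ) (hg : g = (‖Φg‖ ^ 2 : ℝ)) :
    Q Φg = (Complex.exp (φ₂ * Complex.I) * ((1 - Complex.exp (φ₁ * Complex.I)) * g - 1)) • Φg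
      + (Complex.exp (φ₂ * Complex.I) * (1 - Complex.exp (φ₁ * Complex.I)) * g) • Φb := by
  have hPΦg : P Φg = Φg := by rw [hΦg, ← comp_apply, hP2]
  have hinner : inner ℂ Φ Φg = g := by rw [hg, hΦg, inner_apply_eq_norm_apply_sq hP2 hPa]
  have hQΦg : Q Φg = -(U ∘L condPhase0 v φ₁ ∘L adjoint U) (condPhaseProj P φ₂ Φg) := by
    rw [hQ]; rfl
  rw [hQΦg, comp_condPhase0_comp_adjoint hU2, ← hΦ, condPhaseProj_apply_of_apply_eq_self hPΦg,
    map_smul, condPhase0_apply, hinner, hΦb]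
  module

/-- Action of the amplitude amplification operator `Q` on the good component:
`Q|Φ_g⟩ = e^{iφ₂}((1−e^{iφ₁})g − 1)|Φ_g⟩ + e^{iφ₂}(1−e^{iφ₁})g|Φ_b⟩`. -/
theorem Q_action_on_good
    {H : Type*} [NormedAddCommGroup H] [InnerProductSpace ℂ H] [FiniteDimensional ℂ H]
    (U : H →L[ℂ] H)
    (hU1 : ContinuousLinearMap.adjoint U ∘L U = 1)
    (hU2 : U ∘L ContinuousLinearMap.adjoint U = 1)
    (v : H) (hv : ‖v‖ = 1)
    (P : H →L[ℂ] H) (hP2 : P ∘L P = P) (hPa : ContinuousLinearMap.adjoint P = P)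
    (φ₁ φ₂ : ℝ)
    (Q : H →L[ℂ] H)
    (hQ : Q = -(U ∘L condPhase0 v φ₁ ∘L ContinuousLinearMap.adjoint U ∘L condPhaseProj P φ₂))
    (Φ Φg Φb : H) (hΦ : Φ = U v) (hΦg : Φg = P Φ) (hΦb : Φb = Φ - Φg)
    (g : ℂ) (hg : g = (‖Φg‖ ^ 2 : ℝ)) :
    Q Φg = (Complex.exp (φ₂ * Complex.I) * ((1 - Complex.exp (φ₁ * Complex.I)) * g - 1)) • Φg
      + (Complex.exp (φ₂ * Complex.I) * (1 - Complex.exp (φ₁ * Complex.I)) * g) • Φb :=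
  Q_action_on_good_general U hU2 v P hP2 hPa φ₁ φ₂ Q hQ Φ Φg Φb hΦ hΦg hΦb g hg
end

section
/- Amplitude Amplification Theorem: Let U be unitary on a finite-dimensional complex Hilbert space, |0⟩ a unit vector, P an orthogonal projection, |Φ⟩ = U|0⟩ with |Φ_g⟩ = P|Φ⟩, |Φ_b⟩ = (I−P)|Φ⟩, g = ‖Φ_g‖² ∈ (0,1), b = 1−g. Define θ ∈ (0, π/2) by sin²θ = g and Q = −U(I − 2|0⟩⟨0|)U⁻¹(I − 2P). Then for every integer L ≥ 0, Q^L U|0⟩ = (1/√g) sin((2L+1)θ) |Φ_g⟩ + (1/√b) cos((2L+1)θ) |Φ_b⟩. -/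
open Real
open scoped InnerProductSpace

theorem iterate_apply_sin_smul_add_cos_smul {M : Type*} [AddCommGroup M] [Module ℝ M]
    (f : M →ₗ[ℝ] M) {u w : M} {φ : ℝ} (hu : f u = cos φ • u - sin φ • w)
    (hw : f w = sin φ • u + cos φ • w) (x : ℝ) (n : ℕ) :
    f^[n] (sin x • u + cos x • w) = sin (x + n * φ) • u + cos (x + n * φ) • w := by
  induction n with
  | zero => simp
  | succ n ih =>
    rw [Function.iterate_succ_apply', ih, map_add, map_smul, map_smul, hu, hw, Nat.cast_succ,
      add_one_mul, ← add_assoc, sin_add (x + n * φ), cos_add (x + n * φ)]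
    module

theorem inner_map_self_eq_norm_sq_of_isProjection {𝕜 E : Type*} [RCLike 𝕜]
    [NormedAddCommGroup E] [InnerProductSpace 𝕜 E] [CompleteSpace E] {P : E →L[𝕜] E}
    (hP2 : P ∘L P = P) (hPa : ContinuousLinearMap.adjoint P = P) (x : E) :
    ⟪x, P x⟫_𝕜 = (‖P x‖ ^ 2 : ℝ) := by
  calc ⟪x, P x⟫_𝕜 = ⟪x, P (P x)⟫_𝕜 := by rw [← ContinuousLinearMap.comp_apply, hP2]
    _ = ⟪P x, P x⟫_𝕜 := by rw [← ContinuousLinearMap.adjoint_inner_left, hPa]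
    _ = (‖P x‖ ^ 2 : ℝ) := by rw [inner_self_eq_norm_sq_to_K, RCLike.ofReal_pow]

section ComplexHilbert

variable {H : Type*} [NormedAddCommGroup H] [InnerProductSpace ℂ H]

@[simp]
theorem ketBra_apply (v x : H) : ketBra v x = ⟪v, x⟫_ℂ • v := rfl

theorem comp_ketBra_comp_adjoint [CompleteSpace H] (U : H →L[ℂ] H) (v : H) :
    U ∘L ketBra v ∘L ContinuousLinearMap.adjoint U = ketBra (U v) := by
  ext x
  simp [ContinuousLinearMap.adjoint_inner_right]

theorem neg_conj_reflection [CompleteSpace H] {U : H →L[ℂ] H}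
    (hU : U ∘L ContinuousLinearMap.adjoint U = 1) (v : H) :
    -(U ∘L (1 - (2 : ℂ) • ketBra v) ∘L ContinuousLinearMap.adjoint U)
      = (2 : ℂ) • ketBra (U v) - 1 := by
  calc _ = (2 : ℂ) • (U ∘L ketBra v ∘L ContinuousLinearMap.adjoint U)
        - U ∘L ContinuousLinearMap.adjoint U := by ext x; simp
    _ = _ := by rw [comp_ketBra_comp_adjoint, hU]

noncomputable def groverIterate (Φ : H) (P : H →L[ℂ] H) : H →L[ℂ] H :=
  ((2 : ℂ) • ketBra Φ - 1) ∘L (1 - (2 : ℂ) • P)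

section GroverPlane

variable {P : H →L[ℂ] H} {Φ u w : H} {θ : ℝ}

theorem groverIterate_apply_of_map_eq_self (hPu : P u = u)
    (hΦ : Φ = sin θ • u + cos θ • w) (hΦu : ⟪Φ, u⟫_ℂ = sin θ) :
    groverIterate Φ P u = cos (2 * θ) • u - sin (2 * θ) • w := by
  simp only [groverIterate, ContinuousLinearMap.comp_apply, sub_apply, smul_apply,
    one_apply_eq_self, ketBra_apply, hPu, inner_sub_right, inner_smul_right, hΦu]
  rw [cos_two_mul_eq_one_sub, sin_two_mul, hΦ]
  simp only [← Complex.coe_smul]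
  push_cast
  module

theorem groverIterate_apply_of_map_eq_zero (hPw : P w = 0)
    (hΦ : Φ = sin θ • u + cos θ • w) (hΦw : ⟪Φ, w⟫_ℂ = cos θ) :
    groverIterate Φ P w = sin (2 * θ) • u + cos (2 * θ) • w := by
  simp only [groverIterate, ContinuousLinearMap.comp_apply, sub_apply, smul_apply,
    one_apply_eq_self, ketBra_apply, hPw, smul_zero, sub_zero, hΦw]
  rw [cos_two_mul, sin_two_mul, hΦ]
  simp only [← Complex.coe_smul]
  push_cast
  module

theorem groverIterate_pow_apply_of_mem_plane (hPu : P u = u) (hPw : P w = 0)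
    (hΦ : Φ = sin θ • u + cos θ • w) (hΦu : ⟪Φ, u⟫_ℂ = sin θ) (hΦw : ⟪Φ, w⟫_ℂ = cos θ)
    (n : ℕ) :
    (groverIterate Φ P ^ n) Φ
      = sin ((2 * n + 1) * θ) • u + cos ((2 * n + 1) * θ) • w := by
  have hrot := iterate_apply_sin_smul_add_cos_smul
    ((groverIterate Φ P).toLinearMap.restrictScalars ℝ)
    (groverIterate_apply_of_map_eq_self hPu hΦ hΦu)
    (groverIterate_apply_of_map_eq_zero hPw hΦ hΦw) θ n
  rw [← hΦ] at hrot
  rw [FunLike.coe_pow_eq_iterate, show (2 * n + 1) * θ = θ + n * (2 * θ) by ring]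
  exact hrot

end GroverPlane

theorem groverIterate_pow_apply_self [CompleteSpace H] {Φ : H} (hΦ : ‖Φ‖ = 1)
    {P : H →L[ℂ] H} (hP2 : P ∘L P = P) (hPa : ContinuousLinearMap.adjoint P = P) {θ : ℝ}
    (hs : sin θ ≠ 0) (hc : cos θ ≠ 0) (hsin : sin θ ^ 2 = ‖P Φ‖ ^ 2) (n : ℕ) :
    (groverIterate Φ P ^ n) Φ
      = ((sin ((2 * n + 1) * θ) / sin θ : ℝ) : ℂ) • P Φ
        + ((cos ((2 * n + 1) * θ) / cos θ : ℝ) : ℂ) • (Φ - P Φ) := by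
  have hPP : P (P Φ) = P Φ := by rw [← ContinuousLinearMap.comp_apply, hP2]
  have hΦg : ⟪Φ, P Φ⟫_ℂ = (sin θ ^ 2 : ℝ) := by
    rw [hsin, inner_map_self_eq_norm_sq_of_isProjection hP2 hPa]
    rfl
  have hΦb : ⟪Φ, Φ - P Φ⟫_ℂ = (cos θ ^ 2 : ℝ) := by
    rw [inner_sub_right, hΦg, inner_self_eq_norm_sq_to_K, hΦ, cos_sq']
    push_cast
    ring
  have hplane := groverIterate_pow_apply_of_mem_plane (P := P) (θ := θ)
    (u := (sin θ)⁻¹ • P Φ) (w := (cos θ)⁻¹ • (Φ - P Φ))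
    (by rw [ContinuousLinearMap.map_smul_of_tower, hPP])
    (by rw [ContinuousLinearMap.map_smul_of_tower, map_sub, hPP, sub_self, smul_zero])
    (by rw [smul_inv_smul₀ hs, smul_inv_smul₀ hc, add_sub_cancel])
    (by rw [← Complex.coe_smul, inner_smul_right, hΦg]; push_cast; field_simp)
    (by rw [← Complex.coe_smul, inner_smul_right, hΦb]; push_cast; field_simp) n
  rw [hplane, smul_smul, smul_smul, ← Complex.coe_smul, ← Complex.coe_smul, div_eq_mul_inv,
    div_eq_mul_inv]

end ComplexHilbert

theorem amplitude_amplification_general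
    {H : Type*} [NormedAddCommGroup H] [InnerProductSpace ℂ H] [FiniteDimensional ℂ H]
    (U : H →L[ℂ] H)
    (hU1 : ContinuousLinearMap.adjoint U ∘L U = 1)
    (hU2 : U ∘L ContinuousLinearMap.adjoint U = 1)
    (v : H) (hv : ‖v‖ = 1)
    (P : H →L[ℂ] H) (hP2 : P ∘L P = P) (hPa : ContinuousLinearMap.adjoint P = P)
    (Q : H →L[ℂ] H)
    (hQ : Q = -(U ∘L (1 - (2 : ℂ) • ketBra v) ∘L ContinuousLinearMap.adjoint U
                ∘L (1 - (2 : ℂ) • P)))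
    (Φ Φg Φb : H) (hΦ : Φ = U v) (hΦg : Φg = P Φ) (hΦb : Φb = Φ - Φg)
    (g b : ℝ) (hg : g = ‖Φg‖ ^ 2) (hb : b = 1 - g)
    (θ : ℝ) (hθ : θ ∈ Set.Ioo 0 (Real.pi / 2)) (hsin : Real.sin θ ^ 2 = g)
    (L : ℕ) :
    (Q ^ L) (U v)
      = ((Real.sin ((2 * L + 1) * θ) / Real.sqrt g : ℝ) : ℂ) • Φg
        + ((Real.cos ((2 * L + 1) * θ) / Real.sqrt b : ℝ) : ℂ) • Φb := by
  have hs : 0 < sin θ := sin_pos_of_pos_of_lt_pi hθ.1 (by linarith [hθ.2, pi_pos])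
  have hc : 0 < cos θ := cos_pos_of_mem_Ioo ⟨by linarith [hθ.1, pi_pos], hθ.2⟩
  have hΦ1 : ‖Φ‖ = 1 := by
    rw [hΦ, ContinuousLinearMap.norm_map_of_mem_unitary ⟨hU1, hU2⟩, hv]
  have hQΦ : Q = groverIterate Φ P := by
    rw [hQ, hΦ, groverIterate, ← neg_conj_reflection hU2]
    rfl -- the two sides differ by the associativity of `∘L`
  have hsg : √g = sin θ := by rw [← hsin, sqrt_sq hs.le]
  have hsb : √b = cos θ := by rw [hb, ← hsin, ← cos_sq', sqrt_sq hc.le]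
  rw [hQΦ, hsg, hsb, hΦb, hΦg, ← hΦ]
  exact groverIterate_pow_apply_self hΦ1 hP2 hPa hs.ne' hc.ne' (by rw [hsin, hg, hΦg]) L

/-- **Amplitude amplification theorem.** With `Q = −U(I − 2|0⟩⟨0|)U⁻¹(I − 2P)`,
`|Φ⟩ = U|0⟩`, `|Φ_g⟩ = P|Φ⟩`, `|Φ_b⟩ = (I−P)|Φ⟩`, `g = ‖Φ_g‖² ∈ (0,1)`, `b = 1−g`,
and `θ ∈ (0, π/2)` with `sin²θ = g`, for every `L ≥ 0`:
`Q^L U|0⟩ = (1/√g) sin((2L+1)θ)|Φ_g⟩ + (1/√b) cos((2L+1)θ)|Φ_b⟩`. -/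
theorem amplitude_amplification
    {H : Type*} [NormedAddCommGroup H] [InnerProductSpace ℂ H] [FiniteDimensional ℂ H]
    (U : H →L[ℂ] H)
    (hU1 : ContinuousLinearMap.adjoint U ∘L U = 1)
    (hU2 : U ∘L ContinuousLinearMap.adjoint U = 1)
    (v : H) (hv : ‖v‖ = 1)
    (P : H →L[ℂ] H) (hP2 : P ∘L P = P) (hPa : ContinuousLinearMap.adjoint P = P)
    (Q : H →L[ℂ] H)
    (hQ : Q = -(U ∘L (1 - (2 : ℂ) • ketBra v) ∘L ContinuousLinearMap.adjoint U
                ∘L (1 - (2 : ℂ) • P)))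
    (Φ Φg Φb : H) (hΦ : Φ = U v) (hΦg : Φg = P Φ) (hΦb : Φb = Φ - Φg)
    (g b : ℝ) (hg : g = ‖Φg‖ ^ 2) (hg0 : 0 < g) (hg1 : g < 1) (hb : b = 1 - g)
    (θ : ℝ) (hθ : θ ∈ Set.Ioo 0 (Real.pi / 2)) (hsin : Real.sin θ ^ 2 = g)
    (L : ℕ) :
    (Q ^ L) (U v)
      = ((Real.sin ((2 * L + 1) * θ) / Real.sqrt g : ℝ) : ℂ) • Φg
        + ((Real.cos ((2 * L + 1) * θ) / Real.sqrt b : ℝ) : ℂ) • Φb :=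
  amplitude_amplification_general U hU1 hU2 v hv P hP2 hPa Q hQ Φ Φg Φb hΦ hΦg hΦb g b hg hb θ hθ
    hsin L
end

section
/- If 0 < g ≤ 1 and θ ∈ (0, π/2] satisfies sin²θ = g, then choosing L = ⌊π/(4θ)⌋ gives a success probability sin²((2L+1)θ) ≥ 1 − g. In particular if g ≤ 1/2 the amplified success probability is at least 1/2. -/
/-! With `L = ⌊π/(4θ)⌋` the angle `(2L+1)θ` lands within `θ` of `π/2`, so
`sin((2L+1)θ) ≥ cos θ ≥ 0` and hence `sin²((2L+1)θ) ≥ cos²θ = 1 - g`. -/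

open Real

/-- Odd multiples of `θ` are spaced `2θ` apart, so the one chosen by the floor is within `θ`
of any `a ≥ 0`. -/
theorem abs_sub_two_mul_floor_add_one_mul_le {a θ : ℝ} (ha : 0 ≤ a) (hθ : 0 < θ) :
    |a - (2 * ⌊a / (2 * θ)⌋₊ + 1) * θ| ≤ θ := by
  have h2θ : 0 < 2 * θ := by positivity
  have hle : (⌊a / (2 * θ)⌋₊ : ℝ) * (2 * θ) ≤ a :=
    (le_div_iff₀ h2θ).mp (Nat.floor_le (div_nonneg ha h2θ.le))
  have hlt : a < (⌊a / (2 * θ)⌋₊ + 1 : ℝ) * (2 * θ) :=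
    (div_lt_iff₀ h2θ).mp (Nat.lt_floor_add_one _)
  rw [abs_le]
  constructor <;> linarith

theorem cos_le_sin_of_abs_pi_div_two_sub_le {x θ : ℝ} (hθ : θ ≤ π)
    (hx : |π / 2 - x| ≤ θ) : cos θ ≤ sin x := by
  calc cos θ ≤ cos |π / 2 - x| := cos_le_cos_of_nonneg_of_le_pi (abs_nonneg _) hθ hx
    _ = sin x := by rw [cos_abs, cos_pi_div_two_sub]

theorem amplitude_amplification_success_bound_general
    (g θ : ℝ)
    (hθ : θ ∈ Set.Ioc 0 (Real.pi / 2)) (hsin : Real.sin θ ^ 2 = g)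
    (L : ℕ) (hL : L = ⌊Real.pi / (4 * θ)⌋₊) :
    Real.sin ((2 * L + 1) * θ) ^ 2 ≥ 1 - g ∧
      (g ≤ 1 / 2 → Real.sin ((2 * L + 1) * θ) ^ 2 ≥ 1 / 2) := by
  obtain ⟨hθ0, hθ2⟩ := hθ
  have hnear : |π / 2 - (2 * L + 1) * θ| ≤ θ := by
    have hdiv : π / (4 * θ) = π / 2 / (2 * θ) := by rw [div_div]; ring_nf
    rw [hL, hdiv]
    exact abs_sub_two_mul_floor_add_one_mul_le (by positivity) hθ0
  have hcos_le : cos θ ≤ sin ((2 * L + 1) * θ) :=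
    cos_le_sin_of_abs_pi_div_two_sub_le (by linarith [pi_pos]) hnear
  have hcos_nonneg : 0 ≤ cos θ := cos_nonneg_of_mem_Icc ⟨by linarith, hθ2⟩
  have hbound : sin ((2 * L + 1) * θ) ^ 2 ≥ 1 - g := by
    rw [← hsin, ← cos_sq']
    exact pow_le_pow_left₀ hcos_nonneg hcos_le 2
  exact ⟨hbound, fun hg => by linarith⟩

/-- If `0 < g ≤ 1` and `θ ∈ (0, π/2]` with `sin²θ = g`, then `L = ⌊π/(4θ)⌋` iterations of
amplitude amplification give success probability `sin²((2L+1)θ) ≥ 1 − g`; in particular if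
`g ≤ 1/2` the amplified success probability is at least `1/2`. -/
theorem amplitude_amplification_success_bound
    (g θ : ℝ) (hg0 : 0 < g) (hg1 : g ≤ 1)
    (hθ : θ ∈ Set.Ioc 0 (Real.pi / 2)) (hsin : Real.sin θ ^ 2 = g)
    (L : ℕ) (hL : L = ⌊Real.pi / (4 * θ)⌋₊) :
    Real.sin ((2 * L + 1) * θ) ^ 2 ≥ 1 - g ∧
      (g ≤ 1 / 2 → Real.sin ((2 * L + 1) * θ) ^ 2 ≥ 1 / 2) :=
  amplitude_amplification_success_bound_general g θ hθ hsin L hL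
end
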